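/- Let C be a symmetric monoidal category with finite products, !₁ a comonad on C that preserves finite products, !₂ a storage comonad on C, and λ a distributive law of !₁ over !₂. Then the composite comonad !₂ ∘ !₁ is a storage comonad on C. -/

import Mathlib

/-!
The comonad part is Beck's composite of comonads along a distributive law: `l` lifts `!₂` to
`!₁`-coalgebras, so `!₂(δ₁) ≫ l` makes `!₂!₁A` a `!₁`-coalgebra, `δ₂` is a morphism of such
lifted coalgebras, and the comultiplication of `!₂!₁` is `δ₂ ≫ !₂ρ` for the lifted coaction
`ρ`; its coassociativity follows. The comonoid structure is that of `!₂` at `!₁A`, and the new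
`δ` is a coextension `δ₂ ≫ !₂ g`, hence a comonoid morphism. Since `!₁` preserves finite
products, the Seely maps of the composite are those of `!₂` at `!₁A, !₁B` (resp. `*`),
precomposed with `!₂` applied to the product comparison isomorphisms.
-/

open CategoryTheory CategoryTheory.Limits MonoidalCategory

universe v u

/-- A storage comonad structure on the explicit data `(F, δ, ε, c, e)`. -/
structure StorageStruct {C : Type u} [Category.{v} C] [MonoidalCategory C]
    [SymmetricCategory C] [HasFiniteProducts C]
    (F : C ⥤ C)
    (δ : ∀ A : C, F.obj A ⟶ F.obj (F.obj A))
    (ε : ∀ A : C, F.obj A ⟶ A)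
    (c : ∀ A : C, F.obj A ⟶ F.obj A ⊗ F.obj A)
    (e : ∀ A : C, F.obj A ⟶ 𝟙_ C) : Prop where
  /- comonad laws -/
  δ_natural : ∀ {A B : C} (f : A ⟶ B), F.map f ≫ δ B = δ A ≫ F.map (F.map f)
  ε_natural : ∀ {A B : C} (f : A ⟶ B), F.map f ≫ ε B = ε A ≫ f
  left_counit : ∀ A : C, δ A ≫ ε (F.obj A) = 𝟙 (F.obj A)
  right_counit : ∀ A : C, δ A ≫ F.map (ε A) = 𝟙 (F.obj A)
  coassoc : ∀ A : C, δ A ≫ δ (F.obj A) = δ A ≫ F.map (δ A)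
  /- each !A is a cocommutative comonoid, naturally in A -/
  c_natural : ∀ {A B : C} (f : A ⟶ B), F.map f ≫ c B = c A ≫ (F.map f ⊗ₘ F.map f)
  e_natural : ∀ {A B : C} (f : A ⟶ B), F.map f ≫ e B = e A
  comul_coassoc : ∀ A : C,
    c A ≫ (c A ▷ F.obj A) ≫ (α_ (F.obj A) (F.obj A) (F.obj A)).hom
      = c A ≫ (F.obj A ◁ c A)
  comul_counit_left : ∀ A : C, c A ≫ (e A ▷ F.obj A) ≫ (λ_ (F.obj A)).hom = 𝟙 (F.obj A)
  comul_counit_right : ∀ A : C, c A ≫ (F.obj A ◁ e A) ≫ (ρ_ (F.obj A)).hom = 𝟙 (F.obj A)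
  cocomm : ∀ A : C, c A ≫ (β_ (F.obj A) (F.obj A)).hom = c A
  /- δ is a morphism of comonoids -/
  δ_comonoid_mul : ∀ A : C, δ A ≫ c (F.obj A) = c A ≫ (δ A ⊗ₘ δ A)
  δ_comonoid_unit : ∀ A : C, δ A ≫ e (F.obj A) = e A
  /- Seely isomorphisms -/
  seely_unit : IsIso (e (⊤_ C))
  seely_prod : ∀ A B : C,
    IsIso (c (A ⨯ B) ≫ (F.map Limits.prod.fst ⊗ₘ F.map Limits.prod.snd))

namespace CategoryTheory.Comonad

variable {C : Type u} [Category.{v} C]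

/-- A distributive law `l : G T ⟶ T G` lifts the functor `G` to `T`-coalgebras. -/
def liftCoalgebra (T : Comonad C) {G : C ⥤ C} (l : T.toFunctor ⋙ G ⟶ G ⋙ T.toFunctor)
    (hδT : ∀ A : C, G.map (T.δ.app A) ≫ l.app (T.obj A) ≫ T.map (l.app A)
      = l.app A ≫ T.δ.app (G.obj A))
    (hεT : ∀ A : C, l.app A ≫ T.ε.app (G.obj A) = G.map (T.ε.app A))
    (X : T.Coalgebra) : T.Coalgebra where
  A := G.obj X.A
  a := G.map X.a ≫ l.app X.A
  counit := by rw [Category.assoc, hεT, ← G.map_comp, X.counit, G.map_id]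
  coassoc := by
    have hl := l.naturality X.a
    dsimp only [Functor.comp_obj, Functor.comp_map] at hl ⊢
    rw [Category.assoc, ← hδT, ← G.map_comp_assoc, X.coassoc, G.map_comp_assoc, reassoc_of% hl,
      T.map_comp, Category.assoc]

def compOfDistribLaw (T G : Comonad C)
    (l : T.toFunctor ⋙ G.toFunctor ⟶ G.toFunctor ⋙ T.toFunctor)
    (hδT : ∀ A : C, G.map (T.δ.app A) ≫ l.app (T.obj A) ≫ T.map (l.app A)
      = l.app A ≫ T.δ.app (G.obj A))
    (hεT : ∀ A : C, l.app A ≫ T.ε.app (G.obj A) = G.map (T.ε.app A))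
    (hδG : ∀ A : C, G.δ.app (T.obj A) ≫ G.map (l.app A) ≫ l.app (G.obj A)
      = l.app A ≫ T.map (G.δ.app A))
    (hεG : ∀ A : C, l.app A ≫ T.map (G.ε.app A) = G.ε.app (T.obj A)) : Comonad C where
  toFunctor := T.toFunctor ⋙ G.toFunctor
  ε :=
    { app A := G.ε.app (T.obj A) ≫ T.ε.app A
      naturality _ _ f := by
        simp only [Functor.comp_map, Functor.id_map, G.counit_naturality_assoc,
          T.counit_naturality, Category.assoc] }
  δ :=
    { app A := G.δ.app (T.obj A) ≫ G.map (G.map (T.δ.app A)) ≫ G.map (l.app (T.obj A))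
      naturality _ _ f := by
        have hl := l.naturality (T.map f)
        dsimp only [Functor.comp_obj, Functor.comp_map] at hl ⊢
        rw [G.delta_naturality_assoc, Category.assoc, Category.assoc]
        congr 1
        simp only [← G.map_comp]
        rw [← G.map_comp_assoc, T.delta_naturality, G.map_comp_assoc, hl] }
  coassoc A := by
    dsimp only [Functor.comp_obj, Functor.comp_map]
    rw [← G.map_comp (G.map (T.δ.app A))]
    -- `ρ` is the coaction of the lifted cofree coalgebra, and `δ = G.δ ≫ G.map ρ`.
    set ρ := G.map (T.δ.app A) ≫ l.app (T.obj A) with hρ_def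
    have hρ : ρ ≫ T.map ρ = ρ ≫ T.δ.app _ :=
      (T.liftCoalgebra l hδT hεT (T.cofree.obj A)).coassoc.symm
    -- `G.δ` is a morphism of lifted coalgebras.
    have hρδ : ρ ≫ T.map (G.δ.app (T.obj A)) = G.δ.app _ ≫ G.map ρ ≫ l.app _ := by
      rw [hρ_def, G.map_comp_assoc, ← G.delta_naturality_assoc _ (T.δ.app A)]
      dsimp only [Functor.comp_obj]
      rw [hδG, Category.assoc]
    have hlρ : l.app _ ≫ T.map (G.map ρ) = G.map (T.map ρ) ≫ l.app _ :=
      (l.naturality ρ).symm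
    calc (G.δ.app _ ≫ G.map ρ) ≫ G.map (T.map (G.δ.app _ ≫ G.map ρ))
        = G.δ.app _ ≫ G.map (ρ ≫ T.map (G.δ.app _) ≫ T.map (G.map ρ)) := by
          simp only [G.map_comp, T.map_comp, Category.assoc]
      _ = G.δ.app _ ≫ G.map (G.δ.app _ ≫ G.map (ρ ≫ T.map ρ) ≫ l.app _) := by
          rw [reassoc_of% hρδ, hlρ, ← G.map_comp_assoc ρ]
      _ = G.δ.app _ ≫ G.δ.app _ ≫ G.map (G.map ρ) ≫ G.map (G.map (T.δ.app _))
            ≫ G.map (l.app _) := by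
          rw [hρ]; simp only [G.map_comp, G.coassoc_assoc, Category.assoc]; rfl
      _ = _ := by rw [← G.delta_naturality_assoc _ ρ, Category.assoc]; rfl
  left_counit A := by
    have hρ : (G.map (T.δ.app A) ≫ l.app (T.obj A)) ≫ T.ε.app _ = 𝟙 _ :=
      (T.liftCoalgebra l hδT hεT (T.cofree.obj A)).counit
    dsimp only [Functor.comp_obj]
    rw [Category.assoc, Category.assoc, G.counit_naturality_assoc, G.counit_naturality_assoc,
      G.left_counit_assoc, ← Category.assoc, hρ]
  right_counit A := by
    have hl := hεG (T.obj A)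
    dsimp only [Functor.comp_obj, Functor.comp_map]
    simp only [Category.assoc, ← G.map_comp, T.map_comp, reassoc_of% hl]
    rw [G.counit_naturality_assoc, T.right_counit, Category.comp_id, G.right_counit]

end CategoryTheory.Comonad

namespace StorageStruct

variable {C : Type u} [Category.{v} C] [MonoidalCategory C] [SymmetricCategory C]
  [HasFiniteProducts C] {F : C ⥤ C} {δ : ∀ A : C, F.obj A ⟶ F.obj (F.obj A)}
  {ε : ∀ A : C, F.obj A ⟶ A} {c : ∀ A : C, F.obj A ⟶ F.obj A ⊗ F.obj A}
  {e : ∀ A : C, F.obj A ⟶ 𝟙_ C}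

def toComonad (S : StorageStruct F δ ε c e) : Comonad C where
  toFunctor := F
  ε := { app := ε, naturality := fun _ _ f => S.ε_natural f }
  δ := { app := δ, naturality := fun _ _ f => S.δ_natural f }
  coassoc A := (S.coassoc A).symm
  left_counit := S.left_counit
  right_counit := S.right_counit

lemma δ_map_comul (S : StorageStruct F δ ε c e) {X Y : C} (g : F.obj X ⟶ Y) :
    δ X ≫ F.map g ≫ c Y = c X ≫ ((δ X ≫ F.map g) ⊗ₘ (δ X ≫ F.map g)) := by
  rw [S.c_natural, reassoc_of% S.δ_comonoid_mul, tensorHom_comp_tensorHom]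

lemma δ_map_counit (S : StorageStruct F δ ε c e) {X Y : C} (g : F.obj X ⟶ Y) :
    δ X ≫ F.map g ≫ e Y = e X := by
  rw [S.e_natural, S.δ_comonoid_unit]

lemma isIso_e_obj_terminal (S : StorageStruct F δ ε c e) {D : Type*} [Category D]
    [HasTerminal D] (G : D ⥤ C) [PreservesLimit (Functor.empty.{0} D) G] :
    IsIso (e (G.obj (⊤_ D))) := by
  rw [← S.e_natural (PreservesTerminal.iso G).hom]
  have := S.seely_unit
  infer_instance

lemma isIso_seely_prod_obj (S : StorageStruct F δ ε c e) {D : Type*} [Category D]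
    (G : D ⥤ C) (A B : D) [HasBinaryProduct A B] [PreservesLimit (pair A B) G] :
    IsIso (c (G.obj (A ⨯ B)) ≫ (F.map (G.map prod.fst) ⊗ₘ F.map (G.map prod.snd))) := by
  rw [← prodComparison_fst, ← prodComparison_snd, F.map_comp, F.map_comp,
    ← tensorHom_comp_tensorHom, ← Category.assoc, ← S.c_natural, Category.assoc]
  have := S.seely_prod (G.obj A) (G.obj B)
  infer_instance

end StorageStruct

theorem composite_comonad_is_storage
    {C : Type u} [Category.{v} C] [MonoidalCategory C] [SymmetricCategory C]
    [HasFiniteProducts C]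
    -- !₁, a comonad preserving finite products
    (T₁ : Comonad C) [PreservesFiniteProducts T₁.toFunctor]
    -- !₂, a storage comonad
    (F₂ : C ⥤ C)
    (δ₂ : ∀ A : C, F₂.obj A ⟶ F₂.obj (F₂.obj A))
    (ε₂ : ∀ A : C, F₂.obj A ⟶ A)
    (c₂ : ∀ A : C, F₂.obj A ⟶ F₂.obj A ⊗ F₂.obj A)
    (e₂ : ∀ A : C, F₂.obj A ⟶ 𝟙_ C)
    (S : StorageStruct F₂ δ₂ ε₂ c₂ e₂)
    -- λ, a distributive law of !₁ over !₂
    (l : T₁.toFunctor ⋙ F₂ ⟶ F₂ ⋙ T₁.toFunctor)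
    (hμ₁ : ∀ A : C,
      F₂.map (T₁.δ.app A) ≫ l.app (T₁.obj A) ≫ T₁.map (l.app A)
        = l.app A ≫ T₁.δ.app (F₂.obj A))
    (hμ₂ : ∀ A : C,
      δ₂ (T₁.obj A) ≫ F₂.map (l.app A) ≫ l.app (F₂.obj A)
        = l.app A ≫ T₁.map (δ₂ A))
    (hε₂ : ∀ A : C, l.app A ≫ T₁.map (ε₂ A) = ε₂ (T₁.obj A))
    (hε₁ : ∀ A : C, l.app A ≫ T₁.ε.app (F₂.obj A) = F₂.map (T₁.ε.app A)) :
    -- then the composite comonad !₂ ∘ !₁ is a storage comonad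
    StorageStruct (T₁.toFunctor ⋙ F₂)
      (fun A => δ₂ (T₁.obj A) ≫ F₂.map (F₂.map (T₁.δ.app A))
          ≫ F₂.map (l.app (T₁.obj A)))
      (fun A => ε₂ (T₁.obj A) ≫ T₁.ε.app A)
      (fun A => c₂ (T₁.obj A))
      (fun A => e₂ (T₁.obj A)) := by
  let K := T₁.compOfDistribLaw S.toComonad l hμ₁ hε₁ hμ₂ hε₂
  exact
    { δ_natural f := K.δ.naturality f
      ε_natural f := K.ε.naturality f
      left_counit := K.left_counit
      right_counit := K.right_counit
      coassoc A := (K.coassoc A).symm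
      c_natural f := S.c_natural (T₁.map f)
      e_natural f := S.e_natural (T₁.map f)
      comul_coassoc A := S.comul_coassoc (T₁.obj A)
      comul_counit_left A := S.comul_counit_left (T₁.obj A)
      comul_counit_right A := S.comul_counit_right (T₁.obj A)
      cocomm A := S.cocomm (T₁.obj A)
      δ_comonoid_mul A := by
        simpa only [Functor.map_comp, Category.assoc, Functor.comp_obj]
          using S.δ_map_comul (F₂.map (T₁.δ.app A) ≫ l.app (T₁.obj A))
      δ_comonoid_unit A := by
        simpa only [Functor.map_comp, Category.assoc, Functor.comp_obj]
          using S.δ_map_counit (F₂.map (T₁.δ.app A) ≫ l.app (T₁.obj A))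
      seely_unit := S.isIso_e_obj_terminal T₁.toFunctor
      seely_prod A B := S.isIso_seely_prod_obj T₁.toFunctor A B }
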